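/- arXiv:2107.11002 — 3 statements merged into one kernel-verified Lean document; each statement's English description precedes it below -/
import Mathlib

section
/- Let Ω be an invertible symmetric r×r real matrix, θ* ∈ ℝ^r, and ω = Ωθ*. Suppose Ω̃ and ω̃ satisfy ‖Ω̃ − Ω‖_{1,∞} ≤ ζ₁ and ‖ω̃ − ω‖_∞ ≤ ζ₂, and λ ≥ ζ₁‖θ*‖_∞ + ζ₂. If θ̂ minimizes ‖θ‖_∞ subject to ‖Ω̃θ − ω̃‖_∞ ≤ λ, then ‖θ̂ − θ*‖_∞ ≤ 2λ‖Ω⁻¹‖_{1,∞}. -/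
open Matrix

/-- ℓ∞ norm of a vector. -/
noncomputable def linfNorm {r : ℕ} (v : Fin r → ℝ) : ℝ := ⨆ i, |v i|

/-- ℓ_{1,∞} norm of a matrix: maximum column ℓ₁-norm. -/
noncomputable def l1infNorm {r : ℕ} (M : Matrix (Fin r) (Fin r) ℝ) : ℝ :=
  ⨆ j, ∑ i, |M i j|

lemma abs_le_linf {r : ℕ} (v : Fin r → ℝ) (i : Fin r) : |v i| ≤ linfNorm v := by
  unfold linfNorm
  exact le_ciSup (f := fun i => |v i|) (Set.Finite.bddAbove (Set.finite_range _)) i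

lemma linf_nonneg {r : ℕ} (v : Fin r → ℝ) : 0 ≤ linfNorm v :=
  Real.iSup_nonneg fun i => abs_nonneg _

lemma linf_le {r : ℕ} (v : Fin r → ℝ) {c : ℝ} (hc : 0 ≤ c) (h : ∀ i, |v i| ≤ c) :
    linfNorm v ≤ c := Real.iSup_le h hc

lemma l1inf_nonneg {r : ℕ} (M : Matrix (Fin r) (Fin r) ℝ) : 0 ≤ l1infNorm M :=
  Real.iSup_nonneg fun j => Finset.sum_nonneg fun i _ => abs_nonneg _

lemma col_le_l1inf {r : ℕ} (M : Matrix (Fin r) (Fin r) ℝ) (j : Fin r) :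
    ∑ i, |M i j| ≤ l1infNorm M := by
  unfold l1infNorm
  exact le_ciSup (Set.Finite.bddAbove (Set.finite_range (fun j => ∑ i, |M i j|))) j

lemma l1inf_neg {r : ℕ} (M : Matrix (Fin r) (Fin r) ℝ) : l1infNorm (-M) = l1infNorm M := by
  unfold l1infNorm
  congr 1; funext j; exact Finset.sum_congr rfl fun i _ => by simp

lemma linf_triangle {r : ℕ} (u v : Fin r → ℝ) :
    linfNorm (u + v) ≤ linfNorm u + linfNorm v := by
  refine linf_le _ (add_nonneg (linf_nonneg u) (linf_nonneg v)) fun i => ?_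
  calc |(u + v) i| ≤ |u i| + |v i| := abs_add_le _ _
    _ ≤ linfNorm u + linfNorm v := add_le_add (abs_le_linf u i) (abs_le_linf v i)

lemma mulVec_linf_le {r : ℕ} (M : Matrix (Fin r) (Fin r) ℝ) (hM : M.IsSymm)
    (v : Fin r → ℝ) : linfNorm (M.mulVec v) ≤ l1infNorm M * linfNorm v := by
  refine linf_le _ (mul_nonneg (l1inf_nonneg M) (linf_nonneg v)) fun i => ?_
  have hrow : ∑ j, |M i j| ≤ l1infNorm M := by
    have : ∀ j, |M i j| = |M j i| := fun j => by rw [hM.apply i j]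
    calc ∑ j, |M i j| = ∑ j, |M j i| := Finset.sum_congr rfl fun j _ => this j
      _ ≤ l1infNorm M := col_le_l1inf M i
  calc |M.mulVec v i| = |∑ j, M i j * v j| := rfl
    _ ≤ ∑ j, |M i j * v j| := Finset.abs_sum_le_sum_abs _ _
    _ = ∑ j, |M i j| * |v j| := by simp [abs_mul]
    _ ≤ ∑ j, |M i j| * linfNorm v :=
        Finset.sum_le_sum fun j _ => mul_le_mul_of_nonneg_left (abs_le_linf v j) (abs_nonneg _)
    _ = (∑ j, |M i j|) * linfNorm v := by rw [Finset.sum_mul]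
    _ ≤ l1infNorm M * linfNorm v := mul_le_mul_of_nonneg_right hrow (linf_nonneg v)

/-- ℓ∞ error bound for the linear-restricted constrained
Yule–Walker estimator. -/
theorem linearRestricted_linf_bound {r : ℕ}
    (Om Omt : Matrix (Fin r) (Fin r) ℝ) (hOm : Om.IsSymm) (hOmt : Omt.IsSymm)
    (hdet : IsUnit Om.det)
    (thetaStar thetaHat omt : Fin r → ℝ) (zeta1 zeta2 lam : ℝ)
    (h1 : l1infNorm (Omt - Om) ≤ zeta1)
    (h2 : linfNorm (omt - Om.mulVec thetaStar) ≤ zeta2)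
    (hlam : zeta1 * linfNorm thetaStar + zeta2 ≤ lam)
    (hfeas : linfNorm (Omt.mulVec thetaHat - omt) ≤ lam)
    (hopt : ∀ theta : Fin r → ℝ,
      linfNorm (Omt.mulVec theta - omt) ≤ lam → linfNorm thetaHat ≤ linfNorm theta) :
    linfNorm (thetaHat - thetaStar) ≤ 2 * lam * l1infNorm Om⁻¹ := by
  have hdiffsymm : (Omt - Om).IsSymm := hOmt.sub hOm
  -- thetaStar is feasible
  have hstarfeas : linfNorm (Omt.mulVec thetaStar - omt) ≤ lam := by
    have hsplit : Omt.mulVec thetaStar - omt =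
        (Omt - Om).mulVec thetaStar + -(omt - Om.mulVec thetaStar) := by
      funext i
      simp [Matrix.sub_mulVec]
    rw [hsplit]
    calc linfNorm ((Omt - Om).mulVec thetaStar + -(omt - Om.mulVec thetaStar))
        ≤ linfNorm ((Omt - Om).mulVec thetaStar) + linfNorm (-(omt - Om.mulVec thetaStar)) :=
          linf_triangle _ _
      _ ≤ zeta1 * linfNorm thetaStar + zeta2 := by
          refine add_le_add ?_ ?_
          · calc linfNorm ((Omt - Om).mulVec thetaStar)
                ≤ l1infNorm (Omt - Om) * linfNorm thetaStar := mulVec_linf_le _ hdiffsymm _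
              _ ≤ zeta1 * linfNorm thetaStar :=
                  mul_le_mul_of_nonneg_right h1 (linf_nonneg _)
          · have : linfNorm (-(omt - Om.mulVec thetaStar)) =
                linfNorm (omt - Om.mulVec thetaStar) := by
              unfold linfNorm; congr 1; funext i
              simp [abs_sub_comm]
            rw [this]; exact h2
      _ ≤ lam := hlam
  have hhat_le : linfNorm thetaHat ≤ linfNorm thetaStar := hopt _ hstarfeas
  have hz1 : (0:ℝ) ≤ zeta1 := le_trans (l1inf_nonneg _) h1
  -- bound on Om.mulVec (thetaHat - thetaStar)
  have hOmD : linfNorm (Om.mulVec (thetaHat - thetaStar)) ≤ 2 * lam := by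
    have hsplit : Om.mulVec (thetaHat - thetaStar) =
        (Om - Omt).mulVec thetaHat + ((Omt.mulVec thetaHat - omt) +
          (omt - Om.mulVec thetaStar)) := by
      funext i
      simp [Matrix.sub_mulVec, Matrix.mulVec_sub]
    rw [hsplit]
    have hOmOmt : (Om - Omt).IsSymm := hOm.sub hOmt
    have hl1 : l1infNorm (Om - Omt) ≤ zeta1 := by
      have : Om - Omt = -(Omt - Om) := (neg_sub Omt Om).symm
      rw [this, l1inf_neg]; exact h1
    calc linfNorm ((Om - Omt).mulVec thetaHat + ((Omt.mulVec thetaHat - omt) +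
          (omt - Om.mulVec thetaStar)))
        ≤ linfNorm ((Om - Omt).mulVec thetaHat) +
          (linfNorm (Omt.mulVec thetaHat - omt) + linfNorm (omt - Om.mulVec thetaStar)) :=
          le_trans (linf_triangle _ _) (by gcongr; exact linf_triangle _ _)
      _ ≤ zeta1 * linfNorm thetaStar + (lam + zeta2) := by
          refine add_le_add ?_ (add_le_add hfeas h2)
          calc linfNorm ((Om - Omt).mulVec thetaHat)
              ≤ l1infNorm (Om - Omt) * linfNorm thetaHat := mulVec_linf_le _ hOmOmt _
            _ ≤ zeta1 * linfNorm thetaStar := by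
                apply mul_le_mul hl1 hhat_le (linf_nonneg _) hz1
      _ ≤ lam + lam := by linarith
      _ = 2 * lam := by ring
  -- Om⁻¹ is symmetric
  have hinvsymm : (Om⁻¹).IsSymm := by
    unfold Matrix.IsSymm
    rw [Matrix.transpose_nonsing_inv, hOm]
  have hD : thetaHat - thetaStar = Om⁻¹.mulVec (Om.mulVec (thetaHat - thetaStar)) := by
    rw [Matrix.mulVec_mulVec, Matrix.nonsing_inv_mul Om hdet, Matrix.one_mulVec]
  calc linfNorm (thetaHat - thetaStar)
      = linfNorm (Om⁻¹.mulVec (Om.mulVec (thetaHat - thetaStar))) := by rw [← hD]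
    _ ≤ l1infNorm Om⁻¹ * linfNorm (Om.mulVec (thetaHat - thetaStar)) :=
        mulVec_linf_le _ hinvsymm _
    _ ≤ l1infNorm Om⁻¹ * (2 * lam) :=
        mul_le_mul_of_nonneg_left hOmD (l1inf_nonneg _)
    _ = 2 * lam * l1infNorm Om⁻¹ := by ring
end

section
/- Decomposable regularizer error-split: let R be a norm on a real vector space V, and M ⊆ M̄ ⊆ V subspaces with orthogonal complement M̄⊥ of M̄, such that R(w₁+w₂) = R(w₁)+R(w₂) for all w₁ ∈ M, w₂ ∈ M̄⊥. Suppose A* = A*_M + A*_{M̄⊥} with A*_M ∈ M, A*_{M̄⊥} ∈ M̄⊥, and Â satisfies R(Â) ≤ R(A*). Then writing Δ = Â − A* and decomposing Δ = Δ_{M̄} + Δ_{M̄⊥} (projections onto M̄ and M̄⊥), one has R(Δ_{M̄⊥}) ≤ R(Δ_{M̄}) + 2R(A*_{M̄⊥}). -/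
/-- decomposable-regularizer error split
`R(Δ_{M̄⊥}) ≤ R(Δ_{M̄}) + 2 R(A*_{M̄⊥})`. -/
theorem decomposable_error_split {V : Type*} [NormedAddCommGroup V]
    [InnerProductSpace ℝ V] [FiniteDimensional ℝ V]
    (R : V → ℝ)
    (hadd : ∀ x y : V, R (x + y) ≤ R x + R y)
    (hneg : ∀ x : V, R (-x) = R x)
    (M Mbar : Submodule ℝ V) (hMM : M ≤ Mbar)
    (hdecomp : ∀ w₁ ∈ M, ∀ w₂ ∈ Mbarᗮ, R (w₁ + w₂) = R w₁ + R w₂)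
    (Astar Ahat AM Aperp : V)
    (hAM : AM ∈ M) (hAp : Aperp ∈ Mbarᗮ) (hA : Astar = AM + Aperp)
    (hopt : R Ahat ≤ R Astar)
    (DM Dperp : V) (hDM : DM ∈ Mbar) (hDp : Dperp ∈ Mbarᗮ)
    (hD : Ahat - Astar = DM + Dperp) :
    R Dperp ≤ R DM + 2 * R Aperp := by
  have hAhat : Ahat = (AM + Dperp) + (Aperp + DM) := by
    have h := sub_eq_iff_eq_add.mp hD
    rw [h, hA]; abel
  have h1 : R (AM + Dperp) ≤ R Ahat + (R Aperp + R DM) := by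
    calc R (AM + Dperp) = R (Ahat + -(Aperp + DM)) := by rw [hAhat]; congr 1; abel
      _ ≤ R Ahat + R (-(Aperp + DM)) := hadd _ _
      _ = R Ahat + R (Aperp + DM) := by rw [hneg]
      _ ≤ R Ahat + (R Aperp + R DM) := by
          have := hadd Aperp DM; linarith
  have h2 : R (AM + Dperp) = R AM + R Dperp := hdecomp AM hAM Dperp hDp
  have h3 : R Astar ≤ R AM + R Aperp := by rw [hA]; exact hadd _ _
  linarith
end

section
/- Vector truncation bias bound in operator norm direction: let x be a random vector in ℝ^d with sup_{‖v‖₂=1} E[(vᵀx)^{2+2ε}] ≤ M and E‖x‖₂^{2+2ε} ≤ d^{1+ε}M for some ε ∈ (0,1]. Let τ > 0 and x_τ = min(τ,‖x‖₂)·x/‖x‖₂ (with x_τ = 0 when x = 0). Then for every unit vector v, E[(vᵀx)²] − E[(vᵀx_τ)²] ≤ M·(d/τ²)^ε. -/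
open MeasureTheory RealInnerProductSpace Classical


private lemma sum_rpow_bound {n : ℕ} (hn : 0 < n) (a : Fin n → ℝ) (ha : ∀ i, 0 ≤ a i)
    {p : ℝ} (hp : 1 ≤ p) :
    (∑ i, a i) ^ p ≤ (n : ℝ) ^ p * ∑ i, (a i) ^ p := by
  have hn0 : (0:ℝ) < n := by exact_mod_cast hn
  have hn1 : (1:ℝ) ≤ n := by exact_mod_cast hn
  have h := Real.rpow_arith_mean_le_arith_mean_rpow Finset.univ (fun _ => 1/(n:ℝ)) a
    (fun i _ => by positivity) (by simp [Finset.sum_const, Finset.card_univ]; field_simp)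
    (fun i _ => ha i) hp
  rw [← Finset.mul_sum, ← Finset.mul_sum] at h
  rw [Real.mul_rpow (by positivity) (Finset.sum_nonneg fun i _ => ha i)] at h
  have h3 := mul_le_mul_of_nonneg_left h (Real.rpow_nonneg hn0.le p)
  have hcancel : (n:ℝ)^p * ((1:ℝ)/(n:ℝ))^p = 1 := by
    rw [← Real.mul_rpow hn0.le (by positivity), mul_one_div, div_self hn0.ne', Real.one_rpow]
  calc (∑ i, a i)^p = (n:ℝ)^p * ((1:ℝ)/(n:ℝ))^p * (∑ i, a i)^p := by rw [hcancel, one_mul]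
    _ ≤ (n:ℝ)^p * ((1/(n:ℝ)) * ∑ i, a i ^ p) := by rw [mul_assoc]; exact h3
    _ ≤ (n:ℝ)^p * ∑ i, a i ^ p := by
        refine mul_le_mul_of_nonneg_left ?_ (Real.rpow_nonneg hn0.le _)
        refine mul_le_of_le_one_left (Finset.sum_nonneg fun i _ => Real.rpow_nonneg (ha i) _) ?_
        rw [div_le_one hn0]; exact hn1

/-- vector truncation bias bound in an operator-norm direction:
for every unit vector `v`, `E[(vᵀx)²] − E[(vᵀx_τ)²] ≤ M (d/τ²)^ε`. -/
theorem vector_truncation_bias_bound {Ω : Type*} [MeasurableSpace Ω]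
    (μ : Measure Ω) [IsProbabilityMeasure μ]
    {d : ℕ} (x : Ω → EuclideanSpace ℝ (Fin d)) (hx : Measurable x)
    (ε M τ : ℝ) (hε : 0 < ε) (hε1 : ε ≤ 1) (hM : 0 ≤ M) (hτ : 0 < τ)
    (xτ : Ω → EuclideanSpace ℝ (Fin d))
    (hxτ : ∀ ω, xτ ω = if x ω = 0 then 0 else (min τ ‖x ω‖ / ‖x ω‖) • x ω)
    (hmom : ∀ v : EuclideanSpace ℝ (Fin d), ‖v‖ = 1 →
      ∫ ω, |⟪v, x ω⟫| ^ (2 + 2 * ε) ∂μ ≤ M)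
    (hnorm : ∫ ω, ‖x ω‖ ^ (2 + 2 * ε) ∂μ ≤ (d : ℝ) ^ (1 + ε) * M)
    (hmomint : ∀ v : EuclideanSpace ℝ (Fin d), ‖v‖ = 1 →
      Integrable (fun ω => |⟪v, x ω⟫| ^ (2 + 2 * ε)) μ)
    (hint : ∀ v : EuclideanSpace ℝ (Fin d), ‖v‖ = 1 →
      Integrable (fun ω => (⟪v, x ω⟫) ^ 2) μ) :
    ∀ v : EuclideanSpace ℝ (Fin d), ‖v‖ = 1 →
      (∫ ω, (⟪v, x ω⟫) ^ 2 ∂μ) - ∫ ω, (⟪v, xτ ω⟫) ^ 2 ∂μ ≤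
        M * ((d : ℝ) / τ ^ 2) ^ ε := by
  intro v hv
  -- d ≠ 0
  rcases Nat.eq_zero_or_pos d with hd | hd
  · exfalso
    subst hd
    have : v = 0 := Subsingleton.elim v 0
    rw [this, norm_zero] at hv
    norm_num at hv
  have hd1 : (1 : ℝ) ≤ (d : ℝ) := by exact_mod_cast hd
  have hd0 : (0 : ℝ) < (d : ℝ) := by linarith
  -- measurability of xτ
  have hxτm : Measurable xτ := by
    have : xτ = fun ω => if x ω = 0 then 0 else (min τ ‖x ω‖ / ‖x ω‖) • x ω :=
      funext hxτ
    rw [this]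
    refine Measurable.ite (hx (measurableSet_singleton 0)) measurable_const ?_
    exact ((measurable_const.min hx.norm).div hx.norm).smul hx
  -- ‖xτ ω‖ ≤ τ
  have hxτnorm : ∀ ω, ‖xτ ω‖ ≤ τ := by
    intro ω
    rw [hxτ ω]
    split_ifs with h
    · simpa using hτ.le
    · have hxn : 0 < ‖x ω‖ := norm_pos_iff.2 h
      rw [norm_smul, Real.norm_eq_abs, abs_of_nonneg
        (div_nonneg (le_min hτ.le (norm_nonneg _)) (norm_nonneg _)), div_mul_cancel₀ _ hxn.ne']
      exact min_le_left _ _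
  -- the indicator of large norm
  set S : Set Ω := {ω | τ < ‖x ω‖} with hS
  have hSm : MeasurableSet S := measurableSet_lt measurable_const hx.norm
  set g : Ω → ℝ := fun ω => if τ < ‖x ω‖ then (1:ℝ) else 0 with hg
  have hgm : Measurable g := Measurable.ite hSm measurable_const measurable_const
  set f : Ω → ℝ := fun ω => (⟪v, x ω⟫) ^ 2 with hf
  have hfm : Measurable f := ((measurable_const.inner hx)).pow_const 2
  set fτ : Ω → ℝ := fun ω => (⟪v, xτ ω⟫) ^ 2 with hfτ
  have hfτm : Measurable fτ := ((measurable_const.inner hxτm)).pow_const 2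
  -- pointwise bound
  have hpt : ∀ ω, f ω - fτ ω ≤ f ω * g ω := by
    intro ω
    by_cases h : τ < ‖x ω‖
    · have : g ω = 1 := if_pos h
      rw [this, mul_one]
      have : 0 ≤ fτ ω := sq_nonneg _
      linarith
    · have hgz : g ω = 0 := if_neg h
      have hxeq : xτ ω = x ω := by
        rw [hxτ ω]
        split_ifs with h0
        · rw [h0]
        · have hxn : 0 < ‖x ω‖ := norm_pos_iff.2 h0
          rw [min_eq_right (not_lt.1 h), div_self hxn.ne', one_smul]
      simp only [hfτ, hf, hxeq, hgz, mul_zero, sub_self, le_refl]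
  -- integrability of fτ and f*g
  have hfτint : Integrable fτ μ := by
    refine Integrable.mono' (integrable_const (τ^2)) hfτm.aestronglyMeasurable ?_
    filter_upwards with ω
    rw [Real.norm_eq_abs, abs_of_nonneg (sq_nonneg _)]
    have h1 : |⟪v, xτ ω⟫| ≤ τ := by
      calc |⟪v, xτ ω⟫| ≤ ‖v‖ * ‖xτ ω‖ := abs_real_inner_le_norm _ _
        _ = ‖xτ ω‖ := by rw [hv, one_mul]
        _ ≤ τ := hxτnorm ω
    calc (⟪v, xτ ω⟫ : ℝ)^2 = |⟪v, xτ ω⟫|^2 := (sq_abs _).symm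
      _ ≤ τ^2 := by nlinarith [abs_nonneg (⟪v, xτ ω⟫ : ℝ)]
  have hfgint : Integrable (fun ω => f ω * g ω) μ := by
    refine Integrable.mono' (hint v hv) (hfm.mul hgm).aestronglyMeasurable ?_
    filter_upwards with ω
    rw [Real.norm_eq_abs, abs_mul]
    have hg01 : 0 ≤ g ω ∧ g ω ≤ 1 := by
      simp only [hg]; split_ifs <;> norm_num
    calc |f ω| * |g ω| ≤ |f ω| * 1 := by
          refine mul_le_mul_of_nonneg_left ?_ (abs_nonneg _)
          rw [abs_of_nonneg hg01.1]; exact hg01.2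
      _ = f ω := by rw [mul_one, abs_of_nonneg (sq_nonneg _)]
  -- step 1: integral bound by truncated part
  have step1 : (∫ ω, f ω ∂μ) - (∫ ω, fτ ω ∂μ) ≤ ∫ ω, f ω * g ω ∂μ := by
    rw [← integral_sub (hint v hv) hfτint]
    exact integral_mono ((hint v hv).sub hfτint) hfgint hpt
  -- conjugate exponents
  have hpq : Real.HolderConjugate (1 + ε) ((1 + ε) / ε) := by
    rw [Real.holderConjugate_iff]
    constructor
    · linarith
    · field_simp
  -- Memℒp statements
  have hfmem : MemLp f (ENNReal.ofReal (1 + ε)) μ := by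
    have hq0 : ENNReal.ofReal (1+ε) ≠ 0 := by
      simp only [ne_eq, ENNReal.ofReal_eq_zero, not_le]; linarith
    have hqt : ENNReal.ofReal (1+ε) ≠ ⊤ := ENNReal.ofReal_ne_top
    refine (memLp_norm_rpow_iff (p := ENNReal.ofReal (1+ε))
      hfm.aestronglyMeasurable hq0 hqt).1 ?_
    rw [ENNReal.div_self hq0 hqt, memLp_one_iff_integrable]
    have heq : (fun ω => ‖f ω‖ ^ (ENNReal.ofReal (1+ε)).toReal)
        = fun ω => |⟪v, x ω⟫| ^ (2+2*ε) := by
      funext ω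
      rw [ENNReal.toReal_ofReal (by linarith)]
      simp only [hf]
      rw [Real.norm_eq_abs, abs_of_nonneg (sq_nonneg ((⟪v, x ω⟫ : ℝ))), ← sq_abs,
        ← Real.rpow_natCast |(⟪v, x ω⟫ : ℝ)| 2, ← Real.rpow_mul (abs_nonneg _)]
      norm_num
      ring_nf
    rw [heq]
    exact hmomint v hv
  have hgmem : MemLp g (ENNReal.ofReal ((1 + ε) / ε)) μ := by
    refine MemLp.of_bound hgm.aestronglyMeasurable 1 ?_
    filter_upwards with ω
    simp only [hg, Real.norm_eq_abs]
    split_ifs <;> norm_num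
  have hgnn : 0 ≤ᵐ[μ] g := by
    filter_upwards with ω
    simp only [hg]; split_ifs <;> norm_num
  have hfnn : 0 ≤ᵐ[μ] f := Filter.Eventually.of_forall fun ω => sq_nonneg _
  -- Hölder
  have holder := integral_mul_le_Lp_mul_Lq_of_nonneg hpq hfnn hgnn hfmem hgmem
  -- rewrite ∫ f^p
  have hfp : ∫ ω, f ω ^ (1 + ε) ∂μ = ∫ ω, |⟪v, x ω⟫| ^ (2 + 2 * ε) ∂μ := by
    refine integral_congr_ae (Filter.Eventually.of_forall fun ω => ?_)
    simp only [hf]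
    rw [← sq_abs, ← Real.rpow_natCast |⟪v, x ω⟫| 2, ← Real.rpow_mul (abs_nonneg _)]
    norm_num
    ring_nf
  -- rewrite ∫ g^q
  have hgq : ∫ ω, g ω ^ ((1 + ε) / ε) ∂μ = (μ S).toReal := by
    have h1 : (fun ω => g ω ^ ((1+ε)/ε)) = S.indicator (fun _ => (1:ℝ)) := by
      funext ω
      simp only [hg, Set.indicator_apply, hS, Set.mem_setOf_eq]
      split_ifs with h
      · exact Real.one_rpow _
      · exact Real.zero_rpow (by positivity)
    rw [h1, integral_indicator_const _ hSm, smul_eq_mul, mul_one, measureReal_def]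
  -- Markov
  have hnormint : Integrable (fun ω => ‖x ω‖ ^ (2 + 2 * ε)) μ := by
    have hEint : ∀ i : Fin d,
        Integrable (fun ω => |⟪(EuclideanSpace.single i (1:ℝ)), x ω⟫| ^ (2+2*ε)) μ := fun i =>
      hmomint _ (by rw [EuclideanSpace.norm_single]; exact norm_one)
    refine Integrable.mono'
      ((integrable_finset_sum Finset.univ (fun i _ => hEint i)).const_mul ((d:ℝ)^(1+ε)))
      (hx.norm.pow_const _).aestronglyMeasurable ?_
    filter_upwards with ω
    rw [Real.norm_eq_abs, abs_of_nonneg (Real.rpow_nonneg (norm_nonneg _) _)]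
    have hnsq : ‖x ω‖ ^ (2:ℕ) = ∑ i, (x ω i)^2 := by
      rw [EuclideanSpace.norm_eq, Real.sq_sqrt (Finset.sum_nonneg fun i _ => sq_nonneg _)]
      simp [sq_abs]
    have h2 : ‖x ω‖ ^ (2 + 2*ε) = (∑ i, (x ω i)^2) ^ (1+ε) := by
      rw [← hnsq, ← Real.rpow_natCast ‖x ω‖ 2, ← Real.rpow_mul (norm_nonneg _)]
      norm_num
      ring_nf
    have h3 := sum_rpow_bound hd (fun i => (x ω i)^2) (fun i => sq_nonneg _)
      (by linarith : (1:ℝ) ≤ 1 + ε)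
    have h4 : ∀ i : Fin d, ((x ω i)^2 : ℝ) ^ (1+ε)
        = |⟪(EuclideanSpace.single i (1:ℝ)), x ω⟫| ^ (2+2*ε) := by
      intro i
      have : (⟪(EuclideanSpace.single i (1:ℝ)), x ω⟫ : ℝ) = x ω i := by
        rw [EuclideanSpace.inner_single_left]; simp
      rw [this, ← sq_abs, ← Real.rpow_natCast |x ω i| 2, ← Real.rpow_mul (abs_nonneg _)]
      norm_num
      ring_nf
    calc ‖x ω‖ ^ (2 + 2*ε) = (∑ i, (x ω i)^2) ^ (1+ε) := h2
      _ ≤ (d:ℝ)^(1+ε) * ∑ i, ((x ω i)^2 : ℝ) ^ (1+ε) := h3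
      _ = (d:ℝ)^(1+ε) * ∑ i, |⟪(EuclideanSpace.single i (1:ℝ)), x ω⟫| ^ (2+2*ε) := by
          congr 1
          exact Finset.sum_congr rfl fun i _ => h4 i
  have markov : (μ S).toReal ≤ (d : ℝ) ^ (1 + ε) * M / τ ^ (2 + 2 * ε) := by
    have hτp : (0:ℝ) < τ ^ (2+2*ε) := Real.rpow_pos_of_pos hτ _
    have hsub : S ⊆ {ω | τ ^ (2+2*ε) ≤ ‖x ω‖ ^ (2+2*ε)} := fun ω hω =>
      Real.rpow_le_rpow hτ.le (le_of_lt hω) (by linarith)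
    have hmr := mul_meas_ge_le_integral_of_nonneg
      (Filter.Eventually.of_forall fun ω => Real.rpow_nonneg (norm_nonneg _) _)
      hnormint (τ ^ (2+2*ε))
    have hμ : (μ S).toReal ≤ (μ {ω | τ^(2+2*ε) ≤ ‖x ω‖^(2+2*ε)}).toReal :=
      ENNReal.toReal_mono (measure_ne_top μ _) (measure_mono hsub)
    rw [le_div_iff₀ hτp]
    calc (μ S).toReal * τ^(2+2*ε) = τ^(2+2*ε) * (μ S).toReal := mul_comm _ _
      _ ≤ τ^(2+2*ε) * (μ {ω | τ^(2+2*ε) ≤ ‖x ω‖^(2+2*ε)}).toReal :=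
          mul_le_mul_of_nonneg_left hμ hτp.le
      _ ≤ ∫ ω, ‖x ω‖ ^ (2 + 2 * ε) ∂μ := hmr
      _ ≤ (d : ℝ) ^ (1 + ε) * M := hnorm
  -- combine
  have key : ∫ ω, f ω * g ω ∂μ ≤
      M ^ (1 / (1 + ε)) * ((d : ℝ) ^ (1 + ε) * M / τ ^ (2 + 2 * ε)) ^ (ε / (1 + ε)) := by
    have hX0 : 0 ≤ ∫ ω, f ω ^ (1+ε) ∂μ :=
      integral_nonneg fun ω => Real.rpow_nonneg (sq_nonneg _) _
    have h1 : (∫ ω, f ω ^ (1+ε) ∂μ) ^ (1/(1+ε)) ≤ M ^ (1/(1+ε)) :=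
      Real.rpow_le_rpow hX0 (by rw [hfp]; exact hmom v hv) (by positivity)
    have h2 : (∫ ω, g ω ^ ((1+ε)/ε) ∂μ) ^ (1/((1+ε)/ε))
        ≤ ((d:ℝ)^(1+ε)*M/τ^(2+2*ε)) ^ (ε/(1+ε)) := by
      rw [one_div_div, hgq]
      exact Real.rpow_le_rpow ENNReal.toReal_nonneg markov (by positivity)
    have h3 : 0 ≤ (∫ ω, g ω ^ ((1+ε)/ε) ∂μ) ^ (1/((1+ε)/ε)) := by
      rw [one_div_div, hgq]; exact Real.rpow_nonneg ENNReal.toReal_nonneg _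
    calc ∫ ω, f ω * g ω ∂μ
        ≤ (∫ ω, f ω ^ (1+ε) ∂μ) ^ (1/(1+ε))
          * (∫ ω, g ω ^ ((1+ε)/ε) ∂μ) ^ (1/((1+ε)/ε)) := holder
      _ ≤ M ^ (1 / (1 + ε)) * ((d : ℝ) ^ (1 + ε) * M / τ ^ (2 + 2 * ε)) ^ (ε / (1 + ε)) :=
          mul_le_mul h1 h2 h3 (Real.rpow_nonneg hM _)
  have final : M ^ (1 / (1 + ε)) * ((d : ℝ) ^ (1 + ε) * M / τ ^ (2 + 2 * ε)) ^ (ε / (1 + ε))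
      = M * ((d : ℝ) / τ ^ 2) ^ ε := by
    have hp0 : (0:ℝ) < 1 + ε := by linarith
    rcases eq_or_lt_of_le hM with hM0 | hM0
    · rw [← hM0, mul_zero, zero_div, Real.zero_rpow (by positivity),
        Real.zero_rpow (by positivity), zero_mul, zero_mul]
    · have hτ2 : (0:ℝ) < τ ^ (2+2*ε) := Real.rpow_pos_of_pos hτ _
      have hdp : (0:ℝ) < (d:ℝ)^(1+ε) := Real.rpow_pos_of_pos hd0 _
      have e1 : (1+ε) * (ε/(1+ε)) = ε := by field_simp
      have e2 : (2+2*ε) * (ε/(1+ε)) = 2*ε := by field_simp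
      have e4 : 1/(1+ε) + ε/(1+ε) = 1 := by field_simp
      have hMM : M ^ (1/(1+ε)) * M ^ (ε/(1+ε)) = M := by
        rw [← Real.rpow_add hM0, e4, Real.rpow_one]
      rw [Real.div_rpow (by positivity) hτ2.le, Real.mul_rpow hdp.le hM0.le,
        ← Real.rpow_mul hd0.le, ← Real.rpow_mul hτ.le, e1, e2,
        Real.div_rpow hd0.le (by positivity), ← Real.rpow_natCast τ 2,
        ← Real.rpow_mul hτ.le,
        show ((2:ℕ):ℝ)*ε = 2*ε by push_cast; ring]
      linear_combination ((d:ℝ)^ε / τ^(2*ε)) * hMM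
  calc (∫ ω, f ω ∂μ) - (∫ ω, fτ ω ∂μ) ≤ ∫ ω, f ω * g ω ∂μ := step1
    _ ≤ M ^ (1 / (1 + ε)) * ((d : ℝ) ^ (1 + ε) * M / τ ^ (2 + 2 * ε)) ^ (ε / (1 + ε)) := key
    _ = M * ((d : ℝ) / τ ^ 2) ^ ε := final
end
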